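/- arXiv:1006.5100 — 4 statements merged into one kernel-verified Lean document; each statement's English description precedes it below -/
import Mathlib

section
/- Let F be a field, R a (multivariate) polynomial ring over F, and K its field of fractions. Let n ≥ 1 and let Q₁, Q₂, …, Qₙ ∈ R be irreducible polynomials of positive (total) degree that are pairwise coprime (pairwise non-associate). Let Q be an n×n matrix over K whose entries q_{ij} satisfy: q_{1j} = Q₁/Q_j for all 1 ≤ j ≤ n; q_{ij} ∈ {0,1} for all i > 1; q_{ij} = 1 whenever i = j+1; and q_{ij} = 0 whenever i > j+1. Then the determinant of Q is nonzero in K. -/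
open Matrix

private lemma det_updateRow_sum'' {n : ℕ} {R : Type*} [CommRing R]
    (M : Matrix (Fin n) (Fin n) R) (i : Fin n) (c : Fin n → R) (u : Fin n → Fin n → R)
    (s : Finset (Fin n)) :
    (M.updateRow i (∑ j ∈ s, c j • u j)).det = ∑ j ∈ s, c j * (M.updateRow i (u j)).det := by
  induction s using Finset.induction with
  | empty =>
      simp only [Finset.sum_empty]
      exact Matrix.det_eq_zero_of_row_eq_zero i (by simp)
  | insert _ _ ha ih =>
      rw [Finset.sum_insert ha, Finset.sum_insert ha, Matrix.det_updateRow_add,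
        Matrix.det_updateRow_smul, ih]

set_option maxHeartbeats 1000000 in
/-- Lemma on the determinant of an almost-triangular matrix whose
first row consists of the rational functions `Q₁/Q_j` in the fraction field `K`
of a multivariate polynomial ring `R = F[x₁,…,x_m]`, where the `Q_j` are
irreducible, pairwise non-associate (coprime) polynomials of positive total
degree: the determinant is nonzero. -/
theorem stmt0 (F : Type*) [Field F] (m n : ℕ) (hn : 0 < n)
    (Q : Fin n → MvPolynomial (Fin m) F)
    (hirr : ∀ i, Irreducible (Q i))
    (hdeg : ∀ i, 0 < (Q i).totalDegree)
    (hcop : ∀ i j, i ≠ j → ¬ Associated (Q i) (Q j))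
    (M : Matrix (Fin n) (Fin n) (FractionRing (MvPolynomial (Fin m) F)))
    (hrow1 : ∀ j, M ⟨0, hn⟩ j =
      algebraMap (MvPolynomial (Fin m) F) (FractionRing (MvPolynomial (Fin m) F)) (Q ⟨0, hn⟩) /
        algebraMap (MvPolynomial (Fin m) F) (FractionRing (MvPolynomial (Fin m) F)) (Q j))
    (h01 : ∀ i j : Fin n, 0 < (i : ℕ) → M i j = 0 ∨ M i j = 1)
    (hsub : ∀ i j : Fin n, (i : ℕ) = (j : ℕ) + 1 → M i j = 1)
    (hlow : ∀ i j : Fin n, (j : ℕ) + 1 < (i : ℕ) → M i j = 0) :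
    M.det ≠ 0 := by
  classical
  obtain ⟨n, rfl⟩ : ∃ k, n = k + 1 := ⟨n - 1, by omega⟩
  set φ := algebraMap (MvPolynomial (Fin m) F) (FractionRing (MvPolynomial (Fin m) F)) with hφdef
  have h0 : (⟨0, hn⟩ : Fin (n+1)) = 0 := rfl
  have hinj : Function.Injective φ :=
    IsFractionRing.injective (MvPolynomial (Fin m) F) (FractionRing (MvPolynomial (Fin m) F))
  have hQ0 : ∀ i, Q i ≠ 0 := fun i => (hirr i).ne_zero
  have hφQ : ∀ i, φ (Q i) ≠ 0 := fun i h => hQ0 i (hinj (by simpa using h))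
  -- the integer lift of rows ≥ 1
  set A : Matrix (Fin (n+1)) (Fin (n+1)) (MvPolynomial (Fin m) F) := fun i j => if M i j = 1 then 1 else 0 with hA
  set b : Fin (n+1) → MvPolynomial (Fin m) F := fun j => (A.updateRow 0 (Pi.single j 1)).det with hb
  have hMup : ∀ j, M.updateRow 0 (Pi.single j 1) = (A.updateRow 0 (Pi.single j 1)).map φ := by
    intro j
    ext i k
    by_cases hi : i = 0
    · subst hi
      simp [Matrix.updateRow_self, Matrix.map_apply, Pi.single_apply, apply_ite φ]
    · have hi' : 0 < (i : ℕ) := Nat.pos_of_ne_zero (fun h => hi (Fin.ext h))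
      rw [Matrix.updateRow_ne hi, Matrix.map_apply, Matrix.updateRow_ne hi]
      rcases h01 i k hi' with h | h <;> simp [hA, h]
  have hdetb : ∀ j, (M.updateRow 0 (Pi.single j 1)).det = φ (b j) := by
    intro j
    rw [hMup j, hb]
    exact (RingHom.map_det φ _).symm
  -- expansion of the determinant along the first row
  have hrow : M 0 = ∑ j, (φ (Q 0) / φ (Q j)) • Pi.single j 1 := by
    ext k
    rw [← h0, hrow1 k, h0]
    simp [Pi.single_apply]
  have hexp : M.det = ∑ j, (φ (Q 0) / φ (Q j)) * φ (b j) := by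
    conv_lhs => rw [← Matrix.updateRow_eq_self M 0, hrow,
      det_updateRow_sum'' M 0 (fun j => φ (Q 0) / φ (Q j)) (fun j => Pi.single j 1)]
    exact Finset.sum_congr rfl fun j _ => by rw [hdetb j]
  -- the last coefficient is a unit
  set l : Fin (n+1) := Fin.last n with hl
  have hbl : IsUnit (b l) := by
    set B : Matrix (Fin (n+1)) (Fin (n+1)) (MvPolynomial (Fin m) F) :=
      A.updateRow 0 (Pi.single l 1) with hB
    set C : Matrix (Fin (n+1)) (Fin (n+1)) (MvPolynomial (Fin m) F) :=
      B.submatrix (finRotate (n+1)) id with hC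
    have hCentry : ∀ i j : Fin (n+1), (j < i → C i j = 0) ∧ C i i = 1 := by
      intro i j
      by_cases hi : i = Fin.last n
      · subst hi
        have h1 : finRotate (n+1) (Fin.last n) = 0 := by
          simp [finRotate_succ_apply]
        constructor
        · intro hji
          simp only [hC, Matrix.submatrix_apply, h1, id_eq, hB, Matrix.updateRow_self]
          rw [Pi.single_apply, if_neg (by exact fun h => absurd h (Fin.ne_of_lt hji))]
        · simp only [hC, Matrix.submatrix_apply, h1, id_eq, hB, Matrix.updateRow_self]
          rw [Pi.single_apply, if_pos rfl]
      · have hval : (finRotate (n+1) i : ℕ) = (i : ℕ) + 1 := by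
          rw [finRotate_succ_apply, Fin.val_add_one, if_neg hi]
        have hne0 : finRotate (n+1) i ≠ 0 := by
          intro h
          rw [h] at hval
          simp at hval
        constructor
        · intro hji
          simp only [hC, Matrix.submatrix_apply, id_eq, hB, Matrix.updateRow_ne hne0]
          have hMz : M (finRotate (n+1) i) j = 0 := hlow _ _ (by omega)
          rw [finRotate_succ_apply] at hMz
          simp [hA, hMz]
        · simp only [hC, Matrix.submatrix_apply, id_eq, hB, Matrix.updateRow_ne hne0]
          have hMo : M (finRotate (n+1) i) i = 1 := hsub _ _ (by omega)
          rw [finRotate_succ_apply] at hMo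
          simp [hA, hMo]
    have hdetC : C.det = 1 := by
      rw [Matrix.det_of_upperTriangular (fun i j h => (hCentry i j).1 h)]
      exact Finset.prod_eq_one fun i _ => (hCentry i i).2
    have hperm : C.det = (Equiv.Perm.sign (finRotate (n+1)) : ℤ) * B.det :=
      Matrix.det_permute _ _
    have : ((Equiv.Perm.sign (finRotate (n+1)) : ℤ) : MvPolynomial (Fin m) F) * b l = 1 := by
      rw [← hperm, hdetC]
    exact IsUnit.of_mul_eq_one _ ((mul_comm _ _).trans this)
  -- suppose the determinant vanishes
  intro hdet
  have hsum0 : (∑ j, Q 0 * b j * ∏ k ∈ Finset.univ.erase j, Q k) = 0 := by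
    apply hinj
    rw [map_sum, map_zero]
    have : (0 : FractionRing (MvPolynomial (Fin m) F)) = M.det * φ (∏ k, Q k) := by
      rw [hdet, zero_mul]
    rw [this, hexp, Finset.sum_mul]
    refine Finset.sum_congr rfl fun j _ => ?_
    have hprod : (∏ k, Q k) = Q j * ∏ k ∈ Finset.univ.erase j, Q k :=
      (Finset.mul_prod_erase _ _ (Finset.mem_univ j)).symm
    rw [hprod, _root_.map_mul, _root_.map_mul, _root_.map_mul]
    field_simp
    rw [mul_div_assoc, div_self (hφQ j), mul_one]
  by_cases hn1 : n = 0
  · subst hn1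
    have h00 : Q 0 * b 0 = 0 := by
      have huniv : (Finset.univ : Finset (Fin 1)) = {0} := rfl
      simpa [huniv] using hsum0
    have : Q 0 = 0 := by
      have hb0 : IsUnit (b 0) := by simpa [hl] using hbl
      exact (hb0.mul_left_eq_zero).mp h00
    exact hQ0 0 this
  · have hl0 : l ≠ 0 := by
      intro h
      have : (l : ℕ) = 0 := by rw [h]; rfl
      simp only [hl, Fin.val_last] at this
      exact hn1 this
    have hprime : Prime (Q l) := UniqueFactorizationMonoid.irreducible_iff_prime.mp (hirr l)
    have hdvd : Q l ∣ Q 0 * b l * ∏ k ∈ Finset.univ.erase l, Q k := by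
      have heq : Q 0 * b l * ∏ k ∈ Finset.univ.erase l, Q k =
          -∑ j ∈ Finset.univ.erase l, Q 0 * b j * ∏ k ∈ Finset.univ.erase j, Q k := by
        rw [eq_neg_iff_add_eq_zero, ← Finset.add_sum_erase _ _ (Finset.mem_univ l)] at *
        exact hsum0
      rw [heq]
      refine dvd_neg.mpr (Finset.dvd_sum fun j hj => ?_)
      exact dvd_mul_of_dvd_right
        (Finset.dvd_prod_of_mem Q (Finset.mem_erase.mpr ⟨fun h => (Finset.mem_erase.mp hj).1 h.symm, Finset.mem_univ l⟩)) _
    rcases hprime.dvd_mul.mp hdvd with h | h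
    · rcases hprime.dvd_mul.mp h with h | h
      · exact hcop l 0 hl0 ((hirr l).associated_of_dvd (hirr 0) h)
      · exact (hirr l).not_isUnit (isUnit_of_dvd_unit h hbl)
    · obtain ⟨k, hk, hdk⟩ := (hprime.dvd_finset_prod_iff Q).mp h
      exact hcop l k (fun h' => (Finset.mem_erase.mp hk).1 h'.symm)
        ((hirr l).associated_of_dvd (hirr k) hdk)
end

section
/- Let F be a field, n ≥ 1, and consider the multivariate polynomial ring R = F[X₀, X₁, …, Xₙ] with field of fractions K. For each subset S ⊆ {1,…,n}, let L_S = X₀ + Σ_{k∈S} X_k ∈ R. Then the family of 2ⁿ elements (1/L_S)_{S ⊆ {1,…,n}} of K is linearly independent over F. -/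
open MvPolynomial

lemma aux_sum_X_inj (F : Type*) [Field F] (n : ℕ) {S T : Finset (Fin n)}
    (h : (∑ k ∈ S, MvPolynomial.X k : MvPolynomial (Fin n) F) = ∑ k ∈ T, MvPolynomial.X k) :
    S = T := by
  ext k
  have h2 := congrArg (MvPolynomial.eval (fun j => if j = k then (1:F) else 0)) h
  simp only [map_sum, MvPolynomial.eval_X, Finset.sum_ite_eq'] at h2
  by_cases hS : k ∈ S <;> by_cases hT : k ∈ T <;> simp_all

set_option maxHeartbeats 1000000 in
/-- For the polynomial ring `R = F[X₀, X₁, …, Xₙ]` (with `n ≥ 1`)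
and, for each subset `S ⊆ {1,…,n}`, the linear polynomial
`L_S = X₀ + Σ_{k∈S} X_k`, the `2ⁿ` reciprocals `1/L_S`, viewed in the field of
fractions `K` of `R`, are linearly independent over `F`.  Here the variables
are indexed by `Fin (n+1)`, with `0` playing the role of `X₀` and a subset
`S : Finset (Fin n)` selecting variables `X_{k+1}` for `k ∈ S`. -/
theorem stmt3 (F : Type*) [Field F] (n : ℕ) (hn : 1 ≤ n) :
    LinearIndependent F
      (fun S : Finset (Fin n) =>
        (algebraMap (MvPolynomial (Fin (n + 1)) F) (FractionRing (MvPolynomial (Fin (n + 1)) F))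
          (MvPolynomial.X 0 + ∑ k ∈ S, MvPolynomial.X k.succ))⁻¹) := by
  classical
  set R := MvPolynomial (Fin (n+1)) F with hR
  set K := FractionRing R with hK
  set L : Finset (Fin n) → R := fun S => X 0 + ∑ k ∈ S, X k.succ with hLdef
  set A := algebraMap R K with hAdef
  have hAinj : Function.Injective A := IsFractionRing.injective R K
  have hLne : ∀ S, L S ≠ 0 := by
    intro S h
    have h2 := congrArg (MvPolynomial.eval (fun i : Fin (n+1) => if i = 0 then (1:F) else 0)) h
    simp [hLdef, Fin.succ_ne_zero] at h2
  have hALne : ∀ S, A (L S) ≠ 0 := fun S h => hLne S (hAinj (by simpa using h))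
  rw [linearIndependent_iff']
  intro s g hsum S₀ hS₀
  -- clear denominators
  have key : A (∑ S ∈ s, MvPolynomial.C (g S) * ∏ T ∈ s.erase S, L T) = 0 := by
    rw [map_sum]
    calc ∑ S ∈ s, A (MvPolynomial.C (g S) * ∏ T ∈ s.erase S, L T)
        = ∑ S ∈ s, (g S • (A (L S))⁻¹) * A (∏ T ∈ s, L T) := by
          refine Finset.sum_congr rfl fun S hS => ?_
          rw [map_mul, map_prod, map_prod,
            ← Finset.mul_prod_erase s (fun T => A (L T)) hS,
            Algebra.smul_def, IsScalarTower.algebraMap_apply F R K,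
            MvPolynomial.algebraMap_eq]
          rw [mul_assoc, ← mul_assoc ((A (L S))⁻¹), inv_mul_cancel₀ (hALne S), one_mul]
      _ = (∑ S ∈ s, g S • (A (L S))⁻¹) * A (∏ T ∈ s, L T) := (Finset.sum_mul _ _ _).symm
      _ = 0 := by rw [hsum, zero_mul]
  have hP : (∑ S ∈ s, MvPolynomial.C (g S) * ∏ T ∈ s.erase S, L T : R) = 0 :=
    hAinj (by simpa using key)
  -- evaluation
  set R' := MvPolynomial (Fin n) F with hR'
  set K' := FractionRing R' with hK'
  set B := algebraMap R' K' with hBdef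
  have hBinj : Function.Injective B := IsFractionRing.injective R' K'
  set v : Fin (n+1) → K' :=
    Fin.cases (-∑ k ∈ S₀, B (X k)) (fun k => B (X k)) with hv
  set φ := MvPolynomial.aeval (R := F) v with hφ
  have hφL : ∀ S, φ (L S) = B (∑ k ∈ S, X k) - B (∑ k ∈ S₀, X k) := by
    intro S
    simp [hLdef, hφ, hv, map_sum, sub_eq_neg_add, add_comm]
  have hφL0 : φ (L S₀) = 0 := by rw [hφL, sub_self]
  have hφLne : ∀ S, S ≠ S₀ → φ (L S) ≠ 0 := by
    intro S hne h
    rw [hφL, sub_eq_zero] at h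
    exact hne (aux_sum_X_inj F n (hBinj h))
  have hφP := congrArg φ hP
  rw [map_sum, map_zero] at hφP
  rw [Finset.sum_eq_single S₀ (fun S hS hne => by
      rw [map_mul, map_prod, Finset.prod_eq_zero (Finset.mem_erase.mpr ⟨(Ne.symm hne), hS₀⟩) hφL0,
        mul_zero])
    (fun h => absurd hS₀ h)] at hφP
  rw [map_mul, map_prod, MvPolynomial.aeval_C] at hφP
  have hprodne : (∏ T ∈ s.erase S₀, φ (L T)) ≠ 0 :=
    Finset.prod_ne_zero_iff.mpr fun T hT => hφLne T (Finset.mem_erase.mp hT).1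
  have : algebraMap F K' (g S₀) = 0 := by
    rcases mul_eq_zero.mp hφP with h | h
    · exact h
    · exact absurd h hprodne
  exact (map_eq_zero _).mp this
end

section
/- Let s and t be processes of a probabilistic transition system over a finite action set 𝒜. If s and t are probabilistically ready-trace equivalent (s ≈_O t), then s and t are testing equivalent (s ≈_T t), i.e., R(s,T) = R(t,T) as rational functions for every test T. -/
/-! # Reactive probabilistic processes and testing (preamble)

Finite process graphs of a probabilistic transition system (PTS) over a finite
action set `A` are modelled by the inductive type `Proc A`: a process is either
an *action state* (a list of action-labelled successors) or a *probabilistic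
state* (a list of probability-weighted successors).  Well-formedness (`WF`)
requires action transitions to be deterministic per action and, at
probabilistic states, the weights to lie in `(0,1]`, sum to `1`, and lead to
action states.  Tests are processes over `Option A`, where the label `none`
plays the role of the success action `ω`.  The result `Res s T` of testing is a
rational function, an element of the field `RF A` of rational functions in
variables `A` over `ℝ`. -/

/-- Rational functions with variables in `A` over `ℝ` (the set `𝓡`). -/
abbrev RF (A : Type) := FractionRing (MvPolynomial A ℝ)

/-- The scalar `r` as a rational function. -/
noncomputable def Cr {A : Type} (r : ℝ) : RF A :=
  algebraMap (MvPolynomial A ℝ) (RF A) (MvPolynomial.C r)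

/-- The variable `a` as a rational function. -/
noncomputable def Xv {A : Type} (a : A) : RF A :=
  algebraMap (MvPolynomial A ℝ) (RF A) (MvPolynomial.X a)

/-- Process graphs over the action set `A`. -/
inductive Proc (A : Type) : Type
  | act  : List (A × Proc A) → Proc A
  | prob : List (ℝ × Proc A) → Proc A

namespace Proc

variable {A : Type}

/-- The menu `I(s)`: the set of actions enabled at an action state. -/
def menu [DecidableEq A] : Proc A → Finset A
  | act l => (l.map Prod.fst).toFinset
  | prob _ => ∅

/-- Well-formedness of a process graph of a PTS. -/
inductive WF : Proc A → Prop
  | act {l : List (A × Proc A)} :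
      (∀ p ∈ l, ∀ q ∈ l, p.1 = q.1 → p.2 = q.2) →
      (∀ p ∈ l, WF p.2) →
      WF (Proc.act l)
  | prob {l : List (ℝ × Proc A)} :
      (l.map Prod.fst).sum = 1 →
      (∀ p ∈ l, 0 < p.1) →
      (∀ p ∈ l, p.1 ≤ 1) →
      (∀ p ∈ l, ∃ l', p.2 = Proc.act l') →
      (∀ p ∈ l, WF p.2) →
      WF (Proc.prob l)

/-- A process with no probabilistic states (a deterministic process). -/
inductive NoProb : Proc A → Prop
  | act {l : List (A × Proc A)} :
      (∀ p ∈ l, NoProb p.2) → NoProb (Proc.act l)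

/-- First-level menu probability `P_s^1(M)`. -/
def P1 [DecidableEq A] (M : Finset A) : Proc A → ℝ
  | act l => if (l.map Prod.fst).toFinset = M then 1 else 0
  | prob l => (l.attach.map fun x => x.1.1 * P1 M x.1.2).sum
decreasing_by
  rcases x with ⟨⟨r, s⟩, hx⟩
  have h := List.sizeOf_lt_of_mem hx
  simp only [Prod.mk.sizeOf_spec, Proc.prob.sizeOf_spec] at h ⊢
  omega

/-- The `a`-successor of a state, if any. -/
def getSucc [DecidableEq A] (a : A) : Proc A → Option (Proc A)
  | act l => (l.find? fun p => decide (p.1 = a)).map Prod.snd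
  | prob _ => none

/-- The `a`-successor of a state, defaulting to the deadlocked state. -/
def succD [DecidableEq A] (a : A) (s : Proc A) : Proc A :=
  (getSucc a s).getD (Proc.act [])

lemma sizeOf_succD_lt {B : Type} [SizeOf B] [DecidableEq B] {a : B} {l : List (B × Proc B)}
    (h : a ∈ menu (Proc.act l)) :
    sizeOf (succD a (Proc.act l)) < sizeOf (Proc.act l) := by
  rw [menu, List.mem_toFinset, List.mem_map] at h
  obtain ⟨p, hp, rfl⟩ := h
  have hsome : (l.find? fun q => decide (q.1 = p.1)).isSome := by
    rw [List.find?_isSome]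
    exact ⟨p, hp, by simp⟩
  obtain ⟨q, hq⟩ := Option.isSome_iff_exists.mp hsome
  have hmem := List.mem_of_find?_eq_some hq
  have h1 := List.sizeOf_lt_of_mem hmem
  simp only [succD, getSucc, hq, Option.map_some, Option.getD_some]
  rcases q with ⟨b, t⟩
  simp only [Prod.mk.sizeOf_spec, Proc.act.sizeOf_spec] at h1 ⊢
  omega

/-- The process `s_{(M,a)}` obtained from `s` given that the menu `M` was
offered and the action `a ∈ M` was performed (Definition 3 of the paper). -/
noncomputable def pafter [DecidableEq A] (M : Finset A) (a : A) : Proc A → Proc A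
  | act l => succD a (act l)
  | prob l =>
      let l₁ := l.filter fun x => decide (menu x.2 = M)
      let π : ℝ := (l₁.map Prod.fst).sum
      prob (l₁.flatMap fun x =>
        match getSucc a x.2 with
        | none => []
        | some (Proc.prob l'') => l''.map fun y => (x.1 * y.1 / π, y.2)
        | some s' => [(x.1 / π, s')])

/-- The conditional ready-trace probability
`P_s^{n+1}(M | M₁,a₁,…,Mₙ,aₙ)`, as a partial (option-valued) function;
`none` means "undefined". -/
noncomputable def Pcond [DecidableEq A] : Proc A → List (Finset A × A) → Finset A → Option ℝ
  | s, [], M => some (P1 M s)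
  | s, (M₁, a₁) :: rest, M =>
      if 0 < P1 M₁ s then Pcond (pafter M₁ a₁ s) rest M else none

/-- Probabilistic ready-trace equivalence `≈_O`: all conditional ready-trace
probabilities are defined at the same time and agree whenever defined. -/
def RTEquiv [DecidableEq A] (s t : Proc A) : Prop :=
  ∀ (tr : List (Finset A × A)) (M : Finset A), Pcond s tr M = Pcond t tr M

/-- Does the test enable the success action `ω` (encoded by `none`)? -/
def enablesOmega : Proc (Option A) → Bool
  | Proc.act l => l.any fun p => p.1.isNone
  | Proc.prob _ => false

/-- The set `K = I(s) ∩ I(T)` of actions on which process and test can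
synchronize. -/
def sync [DecidableEq A] (s : Proc A) (T : Proc (Option A)) : Finset A :=
  (menu s).filter fun a => some a ∈ menu T

/-- The result `R(s,T) ∈ 𝓡` of testing process `s` with test `T`
(Definition 6 of the paper). -/
noncomputable def Res [DecidableEq A] : Proc A → Proc (Option A) → RF A
  | Proc.prob ls, T =>
      if enablesOmega T then 1
      else (ls.attach.map fun x => Cr x.1.1 * Res x.1.2 T).sum
  | Proc.act ls, Proc.prob lt =>
      (lt.attach.map fun x => Cr x.1.1 * Res (Proc.act ls) x.1.2).sum
  | Proc.act ls, Proc.act lt =>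
      if enablesOmega (Proc.act lt) then 1
      else
        ∑ a ∈ (sync (Proc.act ls) (Proc.act lt)).attach,
          (Xv a.1 / ∑ b ∈ sync (Proc.act ls) (Proc.act lt), Xv b) *
            Res (succD a.1 (Proc.act ls)) (succD (some a.1) (Proc.act lt))
termination_by s T => sizeOf s + sizeOf T
decreasing_by
  · rcases x with ⟨⟨r, s⟩, hx⟩
    have h := List.sizeOf_lt_of_mem hx
    simp only [Prod.mk.sizeOf_spec, Proc.prob.sizeOf_spec] at h ⊢
    omega
  · rcases x with ⟨⟨r, s⟩, hx⟩
    have h := List.sizeOf_lt_of_mem hx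
    simp only [Prod.mk.sizeOf_spec, Proc.prob.sizeOf_spec] at h ⊢
    omega
  · have h1 : a.1 ∈ menu (Proc.act ls) := (Finset.mem_filter.mp a.2).1
    have h2 : (some a.1 : Option A) ∈ menu (Proc.act lt) :=
      (Finset.mem_filter.mp a.2).2
    exact Nat.add_lt_add (sizeOf_succD_lt h1) (sizeOf_succD_lt h2)

/-- Testing equivalence `≈_T`: same testing result for every test. -/
def TestEquiv [DecidableEq A] (s t : Proc A) : Prop :=
  ∀ T : Proc (Option A), WF T → Res s T = Res t T

end Proc


namespace Proc
set_option linter.unusedSectionVars false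
variable {A : Type} [DecidableEq A]

/-- `Cr` as a ring hom. -/
noncomputable def CrRH (A : Type) : ℝ →+* RF A :=
  (algebraMap (MvPolynomial A ℝ) (RF A)).comp (MvPolynomial.C)

lemma Cr_eq (r : ℝ) : Cr (A := A) r = CrRH A r := rfl

lemma Cr_zero : Cr (A := A) 0 = 0 := by simp [Cr_eq]
lemma Cr_one : Cr (A := A) 1 = 1 := by simp [Cr_eq]
lemma Cr_mul (a b : ℝ) : Cr (A := A) (a * b) = Cr a * Cr b := by simp [Cr_eq]

lemma Cr_list_sum (l : List α) (f : α → ℝ) :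
    (l.map fun x => Cr (A := A) (f x)).sum = Cr ((l.map f).sum) := by
  simp only [Cr_eq]
  rw [show (fun x => (CrRH A) (f x)) = ⇑(CrRH A) ∘ f from rfl, ← List.map_map,
    map_list_sum (CrRH A)]

lemma list_sum_attach {M : Type*} [AddCommMonoid M] (l : List α) (f : α → M) :
    (l.attach.map fun x => f x.1).sum = (l.map f).sum := by
  simp [List.attach_map_val]

lemma list_sum_map_add {M : Type*} [AddCommMonoid M] (l : List α) (f g : α → M) :
    (l.map fun x => f x + g x).sum = (l.map f).sum + (l.map g).sum := by
  induction l with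
  | nil => simp
  | cons a t ih => simp [ih]; abel

lemma list_sum_comm {M : Type*} [AddCommMonoid M] (l1 : List α) (l2 : List β) (g : α → β → M) :
    (l1.map fun x => (l2.map fun y => g x y).sum).sum
      = (l2.map fun y => (l1.map fun x => g x y).sum).sum := by
  induction l1 with
  | nil => simp
  | cons a t ih => simp only [List.map_cons, List.sum_cons, ih, ← list_sum_map_add]

lemma list_sum_finset {M : Type*} [AddCommMonoid M] (l : List α) (s : Finset β) (g : α → β → M) :
    (l.map fun x => ∑ b ∈ s, g x b).sum = ∑ b ∈ s, (l.map fun x => g x b).sum := by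
  induction l with
  | nil => simp
  | cons a t ih => simp [ih, Finset.sum_add_distrib]

lemma list_sum_ite_filter {M : Type*} [AddCommMonoid M] (l : List α) (p : α → Prop)
    [DecidablePred p] (f : α → M) :
    (l.map fun x => if p x then f x else 0).sum = ((l.filter fun x => decide (p x)).map f).sum := by
  induction l with
  | nil => simp
  | cons a t ih =>
    by_cases h : p a <;> simp [List.filter_cons, h, ih]

lemma list_sum_flatMap' {M : Type*} [AddCommMonoid M] (l : List α) (F : α → List M) :
    (l.flatMap F).sum = (l.map fun x => (F x).sum).sum := by
  induction l with
  | nil => simp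
  | cons a t ih => simp [List.flatMap_cons, ih]

lemma list_sum_flatMap {M : Type*} [AddCommMonoid M] (l : List α) (F : α → List β) (f : β → M) :
    ((l.flatMap F).map f).sum = (l.map fun x => ((F x).map f).sum).sum := by
  induction l with
  | nil => simp
  | cons a t ih => simp [List.flatMap_cons, ih]


/-! ### Equation lemmas -/

lemma P1_act (M : Finset A) (l : List (A × Proc A)) :
    P1 M (act l) = if menu (act l) = M then 1 else 0 := by
  rw [P1.eq_def]; rfl

lemma P1_prob (M : Finset A) (l : List (ℝ × Proc A)) :
    P1 M (prob l) = (l.map fun x => x.1 * P1 M x.2).sum := by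
  rw [P1.eq_def]
  exact list_sum_attach l (fun x => x.1 * P1 M x.2)

lemma enablesOmega_prob (l : List (ℝ × Proc (Option A))) :
    enablesOmega (prob l) = false := rfl

lemma Res_prob (ls : List (ℝ × Proc A)) (T : Proc (Option A)) (h : enablesOmega T = false) :
    Res (prob ls) T = (ls.map fun x => Cr x.1 * Res x.2 T).sum := by
  rw [Res.eq_def]
  simp only [h, if_neg Bool.false_ne_true]
  exact list_sum_attach ls (fun x => Cr x.1 * Res x.2 T)

lemma Res_omega {T : Proc (Option A)} (h : enablesOmega T = true) (s : Proc A) :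
    Res s T = 1 := by
  cases s with
  | act ls =>
    cases T with
    | act lt => rw [Res.eq_def]; simp [h]
    | prob lt => simp [enablesOmega_prob] at h
  | prob ls => rw [Res.eq_def]; simp [h]

lemma Res_act_prob (ls : List (A × Proc A)) (lt : List (ℝ × Proc (Option A))) :
    Res (act ls) (prob lt) = (lt.map fun x => Cr x.1 * Res (act ls) x.2).sum := by
  rw [Res.eq_def]
  exact list_sum_attach lt (fun x => Cr x.1 * Res (act ls) x.2)

lemma Res_act_act (ls : List (A × Proc A)) (lt : List (Option A × Proc (Option A)))
    (h : enablesOmega (act lt) = false) :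
    Res (act ls) (act lt) =
      ∑ a ∈ sync (act ls) (act lt),
        (Xv a / ∑ b ∈ sync (act ls) (act lt), Xv b) *
          Res (succD a (act ls)) (succD (some a) (act lt)) := by
  rw [Res.eq_def]
  simp only [h, if_neg Bool.false_ne_true]
  exact Finset.sum_attach (sync (act ls) (act lt)) (fun a =>
    (Xv a / ∑ b ∈ sync (act ls) (act lt), Xv b) *
      Res (succD a (act ls)) (succD (some a) (act lt)))

lemma pafter_act (M : Finset A) (a : A) (l : List (A × Proc A)) :
    pafter M a (act l) = succD a (act l) := by
  rw [pafter.eq_def]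

lemma pafter_prob (M : Finset A) (a : A) (l : List (ℝ × Proc A)) :
    pafter M a (prob l) =
      prob ((l.filter fun x => decide (menu x.2 = M)).flatMap fun x =>
        match getSucc a x.2 with
        | none => []
        | some (Proc.prob l'') => l''.map fun y =>
            (x.1 * y.1 / (((l.filter fun x => decide (menu x.2 = M)).map Prod.fst).sum), y.2)
        | some s' => [(x.1 / (((l.filter fun x => decide (menu x.2 = M)).map Prod.fst).sum), s')]) := by
  rfl

lemma Pcond_nil (s : Proc A) (M : Finset A) : Pcond s [] M = some (P1 M s) := by
  rw [Pcond.eq_def]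

lemma Pcond_cons (s : Proc A) (M₁ : Finset A) (a₁ : A) (tr : List (Finset A × A)) (M : Finset A) :
    Pcond s ((M₁, a₁) :: tr) M =
      if 0 < P1 M₁ s then Pcond (pafter M₁ a₁ s) tr M else none := by
  rw [Pcond.eq_def]


/-! ### Structural lemmas -/

lemma getSucc_mem {l : List (A × Proc A)} {a : A} {u : Proc A}
    (h : getSucc a (act l) = some u) : (a, u) ∈ l := by
  simp only [getSucc, Option.map_eq_some_iff] at h
  obtain ⟨p, hp, rfl⟩ := h
  have hmem := List.mem_of_find?_eq_some hp
  have := List.find?_some hp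
  simp only [decide_eq_true_eq] at this
  rwa [← this, Prod.mk.eta]

lemma menu_getSucc {l : List (A × Proc A)} {a : A} (h : a ∈ menu (act l)) :
    ∃ u, getSucc a (act l) = some u := by
  rw [menu, List.mem_toFinset, List.mem_map] at h
  obtain ⟨p, hp, rfl⟩ := h
  have hsome : (l.find? fun q => decide (q.1 = p.1)).isSome := by
    rw [List.find?_isSome]
    exact ⟨p, hp, by simp⟩
  obtain ⟨q, hq⟩ := Option.isSome_iff_exists.mp hsome
  exact ⟨q.2, by simp [getSucc, hq]⟩

lemma succD_of_getSucc {s : Proc A} {a : A} {u : Proc A} (h : getSucc a s = some u) :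
    succD a s = u := by simp [succD, h]

lemma WF_nil : WF (act ([] : List (A × Proc A))) := WF.act (by simp) (by simp)

lemma WF_succD {s : Proc A} (h : WF s) (a : A) : WF (succD a s) := by
  cases s with
  | prob l => exact WF_nil
  | act l =>
    cases hg : getSucc a (act l) with
    | none => simp only [succD, hg]; exact WF_nil
    | some u =>
      rw [succD_of_getSucc hg]
      cases h with
      | act hdet hwf => exact hwf _ (getSucc_mem hg)

lemma P1_nonneg {s : Proc A} (h : WF s) (M : Finset A) : 0 ≤ P1 M s := by
  induction h with
  | act hdet hwf ih => rw [P1_act]; split <;> norm_num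
  | prob hsum hpos hle hact hwf ih =>
    rw [P1_prob]
    apply List.sum_nonneg
    intro x hx
    obtain ⟨p, hp, rfl⟩ := List.mem_map.mp hx
    exact mul_nonneg (hpos p hp).le (ih p hp)

lemma P1_prob_filter {l : List (ℝ × Proc A)} (hact : ∀ p ∈ l, ∃ l', p.2 = act l')
    (M : Finset A) :
    P1 M (prob l) = ((l.filter fun x => decide (menu x.2 = M)).map Prod.fst).sum := by
  rw [P1_prob]
  induction l with
  | nil => simp
  | cons p t ih =>
    obtain ⟨l', hl'⟩ := hact p (by simp)
    have hind : P1 M p.2 = if menu p.2 = M then 1 else 0 := by rw [hl', P1_act]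
    rw [List.map_cons, List.sum_cons, ih (fun q hq => hact q (List.mem_cons_of_mem _ hq)),
      List.filter_cons]
    by_cases hm : menu p.2 = M <;> simp [hm, hind]

lemma Res_prob_total {l : List (ℝ × Proc A)} (hsum : (l.map Prod.fst).sum = 1)
    (T : Proc (Option A)) :
    Res (prob l) T = (l.map fun x => Cr x.1 * Res x.2 T).sum := by
  cases hω : enablesOmega T with
  | false => exact Res_prob l T hω
  | true =>
    rw [Res_omega hω]
    have : (l.map fun x => Cr x.1 * Res x.2 T) = l.map fun x => Cr (A := A) x.1 := by
      apply List.map_congr_left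
      intro x hx
      rw [Res_omega hω, mul_one]
    rw [this, Cr_list_sum l Prod.fst, hsum, Cr_one]

lemma Res_test_prob {s : Proc A} (hs : WF s) (lt : List (ℝ × Proc (Option A))) :
    Res s (prob lt) = (lt.map fun y => Cr y.1 * Res s y.2).sum := by
  cases s with
  | act ls => exact Res_act_prob ls lt
  | prob ls =>
    cases hs with
    | prob hsum hpos hle hact hwf =>
      rw [Res_prob ls (prob lt) (enablesOmega_prob lt)]
      have h1 : ∀ x ∈ ls, Cr x.1 * Res x.2 (prob lt)
          = (lt.map fun y => Cr x.1 * (Cr y.1 * Res x.2 y.2)).sum := by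
        intro x hx
        obtain ⟨l', hl'⟩ := hact x hx
        rw [hl', Res_act_prob, ← List.sum_map_mul_left]
      rw [List.map_congr_left h1, list_sum_comm]
      apply congrArg List.sum
      apply List.map_congr_left
      intro y hy
      rw [Res_prob_total hsum]
      rw [← List.sum_map_mul_left]
      apply congrArg List.sum
      apply List.map_congr_left
      intro x hx
      ring


/-! ### One step of conditioning -/

/-- The contribution of one branch to `pafter M a (prob l)`. -/
noncomputable def condStep (a : A) (π : ℝ) (x : ℝ × Proc A) : List (ℝ × Proc A) :=
  match getSucc a x.2 with
  | none => []
  | some (Proc.prob l'') => l''.map fun y => (x.1 * y.1 / π, y.2)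
  | some s' => [(x.1 / π, s')]

lemma pafter_prob' (M : Finset A) (a : A) (l : List (ℝ × Proc A)) :
    pafter M a (prob l) =
      prob ((l.filter fun x => decide (menu x.2 = M)).flatMap
        (condStep a (((l.filter fun x => decide (menu x.2 = M)).map Prod.fst).sum))) := by
  rw [pafter.eq_def]
  rfl

lemma condStep_eq_act {a : A} {x : ℝ × Proc A} {l'' : List (A × Proc A)}
    (hg : getSucc a x.2 = some (act l'')) (π : ℝ) :
    condStep a π x = [(x.1 / π, act l'')] := by
  simp [condStep, hg]

lemma condStep_eq_prob {a : A} {x : ℝ × Proc A} {l'' : List (ℝ × Proc A)}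
    (hg : getSucc a x.2 = some (prob l'')) (π : ℝ) :
    condStep a π x = l''.map fun y => (x.1 * y.1 / π, y.2) := by
  simp [condStep, hg]

lemma menu_act_of_mem {t : Proc A} {a : A} (ha : a ∈ menu t) :
    ∃ lx, t = act lx := by
  cases t with
  | act lx => exact ⟨lx, rfl⟩
  | prob _ => simp [menu] at ha

lemma condStep_sum {a : A} {x : ℝ × Proc A} (hWF : WF x.2) (ha : a ∈ menu x.2) (π : ℝ) :
    ((condStep a π x).map Prod.fst).sum = x.1 / π := by
  obtain ⟨lx, hlx⟩ := menu_act_of_mem ha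
  obtain ⟨u, hu⟩ := menu_getSucc (hlx ▸ ha)
  rw [← hlx] at hu
  have hWFu : WF u := by
    rw [hlx] at hu hWF
    cases hWF with
    | act hdet hwf => exact hwf _ (getSucc_mem hu)
  cases u with
  | act l'' => rw [condStep_eq_act hu]; simp
  | prob l'' =>
    rw [condStep_eq_prob hu]
    cases hWFu with
    | prob hsum hpos hle hact hwf =>
      rw [List.map_map]
      have : (Prod.fst ∘ fun y : ℝ × Proc A => (x.1 * y.1 / π, y.2))
          = fun y : ℝ × Proc A => (x.1 / π) * y.1 := by
        funext y; simp; ring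
      rw [this, List.sum_map_mul_left, hsum, mul_one]

lemma condStep_mem {a : A} {x : ℝ × Proc A} (hWF : WF x.2) (ha : a ∈ menu x.2)
    {π : ℝ} (hπ : 0 < π) (hc : 0 < x.1) (hcle : x.1 ≤ π) :
    ∀ y ∈ condStep a π x, 0 < y.1 ∧ y.1 ≤ 1 ∧ (∃ l', y.2 = act l') ∧ WF y.2 := by
  obtain ⟨lx, hlx⟩ := menu_act_of_mem ha
  obtain ⟨u, hu⟩ := menu_getSucc (hlx ▸ ha)
  rw [← hlx] at hu
  have hWFu : WF u := by
    rw [hlx] at hu hWF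
    cases hWF with
    | act hdet hwf => exact hwf _ (getSucc_mem hu)
  cases u with
  | act l'' =>
    rw [condStep_eq_act hu]
    rintro y hy
    simp only [List.mem_singleton] at hy
    subst hy
    exact ⟨div_pos hc hπ, (div_le_one hπ).mpr hcle, ⟨l'', rfl⟩, hWFu⟩
  | prob l'' =>
    rw [condStep_eq_prob hu]
    rintro y hy
    obtain ⟨z, hz, rfl⟩ := List.mem_map.mp hy
    cases hWFu with
    | prob hsum hpos hle hact hwf =>
      refine ⟨div_pos (mul_pos hc (hpos z hz)) hπ, ?_, hact z hz, hwf z hz⟩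
      rw [div_le_one hπ]
      calc x.1 * z.1 ≤ x.1 := mul_le_of_le_one_right hc.le (hle z hz)
        _ ≤ π := hcle

lemma condStep_res {a : A} {x : ℝ × Proc A} (hWF : WF x.2) (ha : a ∈ menu x.2)
    (π : ℝ) (T' : Proc (Option A)) :
    ((condStep a π x).map fun y => Cr y.1 * Res y.2 T').sum
      = Cr (x.1 / π) * Res (succD a x.2) T' := by
  obtain ⟨lx, hlx⟩ := menu_act_of_mem ha
  obtain ⟨u, hu⟩ := menu_getSucc (hlx ▸ ha)
  rw [← hlx] at hu
  have hWFu : WF u := by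
    rw [hlx] at hu hWF
    cases hWF with
    | act hdet hwf => exact hwf _ (getSucc_mem hu)
  rw [succD_of_getSucc hu]
  cases u with
  | act l'' => rw [condStep_eq_act hu]; simp
  | prob l'' =>
    rw [condStep_eq_prob hu]
    cases hWFu with
    | prob hsum hpos hle hact hwf =>
      rw [Res_prob_total hsum, ← List.sum_map_mul_left, List.map_map]
      apply congrArg List.sum
      apply List.map_congr_left
      intro y hy
      simp only [Function.comp_apply]
      rw [show x.1 * y.1 / π = (x.1 / π) * y.1 by ring, Cr_mul]
      ring


section Key

variable {l : List (ℝ × Proc A)} {M : Finset A} {a : A}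

lemma filter_mem_props (hWF : WF (prob l)) (ha : a ∈ M)
    {x : ℝ × Proc A} (hx : x ∈ l.filter fun x => decide (menu x.2 = M)) :
    WF x.2 ∧ a ∈ menu x.2 ∧ 0 < x.1
      ∧ x.1 ≤ ((l.filter fun x => decide (menu x.2 = M)).map Prod.fst).sum := by
  have hxl : x ∈ l := List.mem_of_mem_filter hx
  have hxM : menu x.2 = M := by simpa using List.of_mem_filter hx
  cases hWF with
  | prob hsum hpos hle hact hwf =>
    refine ⟨hwf x hxl, hxM ▸ ha, hpos x hxl, ?_⟩
    apply List.single_le_sum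
    · intro r hr
      obtain ⟨p, hp, rfl⟩ := List.mem_map.mp hr
      exact (hpos p (List.mem_of_mem_filter hp)).le
    · exact List.mem_map_of_mem (f := Prod.fst) hx

lemma pi_pos (hWF : WF (prob l)) (hpos : 0 < P1 M (prob l)) :
    0 < ((l.filter fun x => decide (menu x.2 = M)).map Prod.fst).sum := by
  cases hWF with
  | prob hsum hp hle hact hwf => rwa [P1_prob_filter hact] at hpos

lemma WF_pafter {s : Proc A} (h : WF s) {M : Finset A} {a : A} (ha : a ∈ M)
    (hpos : 0 < P1 M s) : WF (pafter M a s) := by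
  cases s with
  | act ls => rw [pafter_act]; exact WF_succD h a
  | prob l =>
    have hπ := pi_pos h hpos
    set π := ((l.filter fun x => decide (menu x.2 = M)).map Prod.fst).sum with hπdef
    rw [pafter_prob', ← hπdef]
    have hmem : ∀ y ∈ (l.filter fun x => decide (menu x.2 = M)).flatMap (condStep a π),
        0 < y.1 ∧ y.1 ≤ 1 ∧ (∃ l', y.2 = act l') ∧ WF y.2 := by
      intro y hy
      obtain ⟨x, hx, hyx⟩ := List.mem_flatMap.mp hy
      obtain ⟨h1, h2, h3, h4⟩ := filter_mem_props h ha hx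
      exact condStep_mem h1 h2 hπ h3 (hπdef ▸ h4) y hyx
    refine WF.prob ?_ (fun y hy => (hmem y hy).1) (fun y hy => (hmem y hy).2.1)
      (fun y hy => (hmem y hy).2.2.1) (fun y hy => (hmem y hy).2.2.2)
    -- sum of weights is 1
    rw [List.map_flatMap, list_sum_flatMap']
    have h1 : ((l.filter fun x => decide (menu x.2 = M)).map
        fun x => ((condStep a π x).map Prod.fst).sum)
        = (l.filter fun x => decide (menu x.2 = M)).map fun x => x.1 * π⁻¹ := by
      apply List.map_congr_left
      intro x hx
      obtain ⟨h1, h2, h3, h4⟩ := filter_mem_props h ha hx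
      rw [condStep_sum h1 h2, div_eq_mul_inv]
    rw [h1, List.sum_map_mul_right, ← hπdef, mul_inv_cancel₀ hπ.ne']

lemma keyB (hWF : WF (prob l)) (ha : a ∈ M) (T' : Proc (Option A)) :
    Cr (P1 M (prob l)) * Res (pafter M a (prob l)) T'
      = ((l.filter fun x => decide (menu x.2 = M)).map
          fun x => Cr x.1 * Res (succD a x.2) T').sum := by
  have hP1 : P1 M (prob l) = ((l.filter fun x => decide (menu x.2 = M)).map Prod.fst).sum := by
    cases hWF with
    | prob hsum hp hle hact hwf => exact P1_prob_filter hact M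
  set π := ((l.filter fun x => decide (menu x.2 = M)).map Prod.fst).sum with hπdef
  by_cases hπ : 0 < π
  · cases hω : enablesOmega T' with
    | true =>
      rw [Res_omega hω, mul_one, hP1]
      have : ((l.filter fun x => decide (menu x.2 = M)).map
          fun x => Cr x.1 * Res (succD a x.2) T')
          = (l.filter fun x => decide (menu x.2 = M)).map fun x => Cr (A := A) x.1 := by
        apply List.map_congr_left
        intro x hx
        rw [Res_omega hω, mul_one]
      rw [this, Cr_list_sum]
    | false =>
      rw [pafter_prob', ← hπdef, Res_prob _ _ hω, list_sum_flatMap]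
      have h1 : ((l.filter fun x => decide (menu x.2 = M)).map
          fun x => ((condStep a π x).map fun y => Cr y.1 * Res y.2 T').sum)
          = (l.filter fun x => decide (menu x.2 = M)).map
              fun x => Cr (x.1 / π) * Res (succD a x.2) T' := by
        apply List.map_congr_left
        intro x hx
        obtain ⟨hw1, hw2, hw3, hw4⟩ := filter_mem_props hWF ha hx
        exact condStep_res hw1 hw2 π T'
      rw [h1, ← List.sum_map_mul_left]
      apply congrArg List.sum
      apply List.map_congr_left
      intro x hx
      rw [hP1, ← mul_assoc, ← Cr_mul, mul_comm π (x.1 / π), div_mul_cancel₀ _ hπ.ne']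
  · -- π ≤ 0 : filter must be empty
    have hempty : l.filter (fun x => decide (menu x.2 = M)) = [] := by
      by_contra hne
      apply hπ
      rw [hπdef]
      apply List.sum_pos
      · intro r hr
        obtain ⟨p, hp, rfl⟩ := List.mem_map.mp hr
        exact (filter_mem_props hWF ha hp).2.2.1
      · simpa using hne
    rw [hP1, show π = 0 by rw [hπdef, hempty]; simp, Cr_zero, zero_mul,
      hempty, List.map_nil, List.sum_nil]

end Key


lemma sync_eq (ls : List (A × Proc A)) (lt : List (Option A × Proc (Option A))) :
    sync (act ls) (act lt)
      = (menu (act ls)).filter fun a => some a ∈ menu (act lt) := rfl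

section Decompose

variable [Fintype A]

lemma decompose_act (ls : List (A × Proc A)) (lt : List (Option A × Proc (Option A)))
    (hω : enablesOmega (act lt) = false) :
    Res (act ls) (act lt) =
      ∑ M : Finset A, Cr (P1 M (act ls)) *
        ∑ a ∈ M.filter (fun a => some a ∈ menu (act lt)),
          (Xv a / ∑ b ∈ M.filter (fun b => some b ∈ menu (act lt)), Xv b) *
            Res (succD a (act ls)) (succD (some a) (act lt)) := by
  rw [Res_act_act ls lt hω, Finset.sum_eq_single (menu (act ls))]
  · rw [P1_act, if_pos rfl, Cr_one, one_mul, sync_eq]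
  · intro M _ hM
    rw [P1_act, if_neg (fun h => hM h.symm), Cr_zero, zero_mul]
  · intro h
    exact absurd (Finset.mem_univ _) h

lemma decompose {s : Proc A} (hs : WF s) (lt : List (Option A × Proc (Option A)))
    (hω : enablesOmega (act lt) = false) :
    Res s (act lt) =
      ∑ M : Finset A, Cr (P1 M s) *
        ∑ a ∈ M.filter (fun a => some a ∈ menu (act lt)),
          (Xv a / ∑ b ∈ M.filter (fun b => some b ∈ menu (act lt)), Xv b) *
            Res (pafter M a s) (succD (some a) (act lt)) := by
  cases s with
  | act ls =>
    rw [decompose_act ls lt hω]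
    apply Finset.sum_congr rfl
    intro M _
    congr 1
  | prob l =>
    have hM : ∀ M : Finset A,
        Cr (P1 M (prob l)) *
          ∑ a ∈ M.filter (fun a => some a ∈ menu (act lt)),
            (Xv a / ∑ b ∈ M.filter (fun b => some b ∈ menu (act lt)), Xv b) *
              Res (pafter M a (prob l)) (succD (some a) (act lt))
        = (l.map fun x => if menu x.2 = M then
            ∑ a ∈ M.filter (fun a => some a ∈ menu (act lt)),
              (Xv a / ∑ b ∈ M.filter (fun b => some b ∈ menu (act lt)), Xv b) *
                (Cr x.1 * Res (succD a x.2) (succD (some a) (act lt))) else 0).sum := by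
      intro M
      rw [Finset.mul_sum]
      have step1 : ∀ a ∈ M.filter (fun a => some a ∈ menu (act lt)),
          Cr (P1 M (prob l)) *
            ((Xv a / ∑ b ∈ M.filter (fun b => some b ∈ menu (act lt)), Xv b) *
              Res (pafter M a (prob l)) (succD (some a) (act lt)))
          = (l.map fun x => if menu x.2 = M then
              (Xv a / ∑ b ∈ M.filter (fun b => some b ∈ menu (act lt)), Xv b) *
                (Cr x.1 * Res (succD a x.2) (succD (some a) (act lt))) else 0).sum := by
        intro a haK
        have haM : a ∈ M := (Finset.mem_filter.mp haK).1
        rw [mul_left_comm, keyB hs haM, ← List.sum_map_mul_left,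
          ← list_sum_ite_filter l (fun x => menu x.2 = M)
            (fun x => (Xv a / ∑ b ∈ M.filter (fun b => some b ∈ menu (act lt)), Xv b) *
              (Cr x.1 * Res (succD a x.2) (succD (some a) (act lt))))]
      rw [Finset.sum_congr rfl step1, ← list_sum_finset]
      apply congrArg List.sum
      apply List.map_congr_left
      intro x hx
      rw [Finset.sum_ite_irrel, Finset.sum_const_zero]
    rw [Finset.sum_congr rfl (fun M _ => hM M), ← list_sum_finset,
      Res_prob l (act lt) hω]
    apply congrArg List.sum
    apply List.map_congr_left
    intro x hx
    rw [Finset.sum_ite_eq Finset.univ (menu x.2), if_pos (Finset.mem_univ _)]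
    obtain ⟨lx, hlx⟩ : ∃ lx, x.2 = act lx := by
      cases hs with
      | prob hsum hpos hle hact hwf => exact hact x hx
    conv_lhs => rw [hlx, Res_act_act lx lt hω]
    rw [Finset.mul_sum]
    apply Finset.sum_congr
    · rw [sync_eq, hlx]
    · intro a ha
      rw [sync_eq, hlx]
      ring

end Decompose


section Gdef

variable [Fintype A]

/-- The testing result as a function of the conditional ready-trace data. -/
noncomputable def G : Proc (Option A) → (List (Finset A × A) → Finset A → ℝ) → RF A
  | Proc.prob lt, f => (lt.attach.map fun x => Cr x.1.1 * G x.1.2 f).sum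
  | Proc.act lt, f =>
      if enablesOmega (Proc.act lt) then 1
      else
        ∑ M : Finset A, Cr (f [] M) *
          ∑ a ∈ (M.filter fun a => some a ∈ menu (Proc.act lt)).attach,
            (Xv a.1 / ∑ b ∈ M.filter (fun b => some b ∈ menu (Proc.act lt)), Xv b) *
              G (succD (some a.1) (Proc.act lt)) (fun tr N => f ((M, a.1) :: tr) N)
termination_by T _ => sizeOf T
decreasing_by
  · rcases x with ⟨⟨r, u⟩, hx⟩
    have h := List.sizeOf_lt_of_mem hx
    simp only [Prod.mk.sizeOf_spec, Proc.prob.sizeOf_spec] at h ⊢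
    omega
  · exact sizeOf_succD_lt (Finset.mem_filter.mp a.2).2

lemma G_prob (lt : List (ℝ × Proc (Option A))) (f : List (Finset A × A) → Finset A → ℝ) :
    G (prob lt) f = (lt.map fun x => Cr x.1 * G x.2 f).sum := by
  rw [G]
  exact list_sum_attach lt (fun x => Cr x.1 * G x.2 f)

lemma G_act_omega (lt : List (Option A × Proc (Option A)))
    (f : List (Finset A × A) → Finset A → ℝ) (hω : enablesOmega (act lt) = true) :
    G (act lt) f = 1 := by
  rw [G, if_pos hω]

lemma G_act (lt : List (Option A × Proc (Option A)))
    (f : List (Finset A × A) → Finset A → ℝ) (hω : enablesOmega (act lt) = false) :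
    G (act lt) f =
      ∑ M : Finset A, Cr (f [] M) *
        ∑ a ∈ M.filter (fun a => some a ∈ menu (act lt)),
          (Xv a / ∑ b ∈ M.filter (fun b => some b ∈ menu (act lt)), Xv b) *
            G (succD (some a) (act lt)) (fun tr N => f ((M, a) :: tr) N) := by
  rw [G, if_neg (by simp [hω])]
  apply Finset.sum_congr rfl
  intro M _
  congr 1
  exact Finset.sum_attach _ (fun a =>
    (Xv a / ∑ b ∈ M.filter (fun b => some b ∈ menu (act lt)), Xv b) *
      G (succD (some a) (act lt)) (fun tr N => f ((M, a) :: tr) N))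

theorem main (T : Proc (Option A)) (hT : WF T) (s : Proc A) (hs : WF s) :
    Res s T = G T (fun tr M => (Pcond s tr M).getD 0) := by
  cases T with
  | prob lt =>
    rw [Res_test_prob hs lt, G_prob]
    apply congrArg List.sum
    apply List.map_congr_left
    intro y hy
    have hTy : WF y.2 := by
      cases hT with
      | prob hsum hpos hle hact hwf => exact hwf y hy
    rw [main y.2 hTy s hs]
  | act lt =>
    cases hω : enablesOmega (act lt) with
    | true => rw [Res_omega hω, G_act_omega lt _ hω]
    | false =>
      rw [decompose hs lt hω, G_act lt _ hω]
      apply Finset.sum_congr rfl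
      intro M _
      rw [Pcond_nil, Option.getD_some]
      by_cases hpos : 0 < P1 M s
      · congr 1
        apply Finset.sum_congr rfl
        intro a haK
        have haM : a ∈ M := (Finset.mem_filter.mp haK).1
        congr 1
        have hWFp : WF (pafter M a s) := WF_pafter hs haM hpos
        have hWFsucc : WF (succD (some a) (act lt)) := WF_succD hT (some a)
        rw [main (succD (some a) (act lt)) hWFsucc (pafter M a s) hWFp]
        congr 1
        funext tr N
        rw [Pcond_cons, if_pos hpos]
      · have h0 : P1 M s = 0 := le_antisymm (not_lt.mp hpos) (P1_nonneg hs M)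
        rw [h0, Cr_zero, zero_mul, zero_mul]
termination_by sizeOf T
decreasing_by
  · subst T
    exact sizeOf_succD_lt (Finset.mem_filter.mp haK).2
  · subst T
    have h := List.sizeOf_lt_of_mem hy
    rcases y with ⟨r, u⟩
    simp only [Prod.mk.sizeOf_spec, Proc.prob.sizeOf_spec] at h ⊢
    omega

end Gdef

end Proc


open Proc in
/-- Theorem 3 of the paper: probabilistic ready-trace equivalence
implies testing equivalence. -/
theorem stmt5 {A : Type} [Fintype A] [DecidableEq A] (s t : Proc A)
    (hs : WF s) (ht : WF t) (h : RTEquiv s t) :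
    TestEquiv s t := by
  intro T hT
  rw [main T hT s hs, main T hT t ht]
  congr 1
  funext tr M
  rw [h tr M]
end

section
/- Let s and t be processes of a probabilistic transition system over a finite action set 𝒜 such that P_s^1(M) = P_t^1(M) for every menu M ⊆ 𝒜. Suppose a₁ ∈ 𝒜 and M₁ ⊆ 𝒜 are such that a₁ ∈ M₁, P_s^1(M₁) > 0, a₁ belongs to no first-level menu of s other than M₁ (i.e., for every menu M with P_s^1(M) > 0 and a₁ ∈ M, one has M = M₁), and there is a test T₁ with R(s_{(M₁,a₁)}, T₁) ≠ R(t_{(M₁,a₁)}, T₁). Then the test T = a₁.T₁ (offering only a₁ and then continuing as T₁) distinguishes s and t: R(s,T) ≠ R(t,T). -/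
namespace ProofAux
open Proc
variable {A : Type} [DecidableEq A]

lemma Cr_eq_zero_iff {r : ℝ} : (Cr r : RF A) = 0 ↔ r = 0 := by
  rw [Cr, IsFractionRing.to_map_eq_zero_iff, MvPolynomial.C_eq_zero]

lemma Cr_mul (a b : ℝ) : (Cr (a * b) : RF A) = Cr a * Cr b := by
  simp [Cr, map_mul]

lemma Xv_ne_zero (a : A) : (Xv a : RF A) ≠ 0 := by
  rw [Xv, Ne, IsFractionRing.to_map_eq_zero_iff]
  exact MvPolynomial.X_ne_zero a

lemma res_of_omega (T : Proc (Option A)) (h : enablesOmega T = true) (s : Proc A) :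
    Res s T = 1 := by
  cases s with
  | act ls =>
    cases T with
    | act lt => rw [Res, if_pos h]
    | prob lt => simp [enablesOmega] at h
  | prob ls => rw [Res, if_pos h]

lemma attach_sum {α β : Type*} [AddCommMonoid β] (l : List α) (f : α → β) :
    (l.attach.map fun x => f x.1).sum = (l.map f).sum := by
  rw [List.attach_map_val]

lemma sum_map_ite {α β : Type*} [AddCommMonoid β] (p : α → Prop) [DecidablePred p]
    (f : α → β) (l : List α) :
    (l.map fun x => if p x then f x else 0).sum
      = ((l.filter fun x => decide (p x)).map f).sum := by
  induction l with
  | nil => rfl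
  | cons a l ih => by_cases h : p a <;> simp [List.filter_cons, h, ih]

lemma sum_map_flatMap {α β γ : Type*} [AddCommMonoid γ] (l : List α) (f : α → List β)
    (g : β → γ) :
    ((l.flatMap f).map g).sum = (l.map fun x => ((f x).map g).sum).sum := by
  induction l with
  | nil => rfl
  | cons a l ih => simp [List.flatMap_cons, ih]

lemma sum_map_mul {α β : Type*} [NonUnitalNonAssocSemiring β] (c : β) (l : List α)
    (f : α → β) :
    (l.map fun x => c * f x).sum = c * (l.map f).sum := by
  induction l with
  | nil => simp
  | cons a l ih => simp [ih, mul_add]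

lemma getSucc_of_mem {a : A} {l : List (A × Proc A)} (h : a ∈ menu (Proc.act l)) :
    getSucc a (Proc.act l) = some (succD a (Proc.act l)) := by
  rw [menu, List.mem_toFinset, List.mem_map] at h
  obtain ⟨p, hp, rfl⟩ := h
  have hsome : (l.find? fun q => decide (q.1 = p.1)).isSome := by
    rw [List.find?_isSome]; exact ⟨p, hp, by simp⟩
  obtain ⟨q, hq⟩ := Option.isSome_iff_exists.mp hsome
  simp only [getSucc, succD, hq, Option.map_some, Option.getD_some]

lemma P1_act (M : Finset A) (l : List (A × Proc A)) :
    P1 M (Proc.act l) = if menu (Proc.act l) = M then 1 else 0 := by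
  rw [P1]; rfl

lemma P1_prob' (M : Finset A) (ls : List (ℝ × Proc A)) :
    P1 M (Proc.prob ls) = (ls.map fun p => p.1 * P1 M p.2).sum := by
  rw [P1, attach_sum ls (fun p => p.1 * P1 M p.2)]

lemma P1_prob (M : Finset A) (ls : List (ℝ × Proc A))
    (hact : ∀ p ∈ ls, ∃ l', p.2 = Proc.act l') :
    P1 M (Proc.prob ls)
      = ((ls.filter fun x => decide (menu x.2 = M)).map Prod.fst).sum := by
  rw [P1_prob']
  rw [← sum_map_ite (fun x => menu x.2 = M) Prod.fst ls]
  apply congrArg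
  apply List.map_congr_left
  intro p hp
  obtain ⟨l', hl'⟩ := hact p hp
  rw [hl', P1_act]
  by_cases h : menu (Proc.act l') = M <;> simp [h]

lemma enablesOmega_single (a₁ : A) (T₁ : Proc (Option A)) :
    enablesOmega (Proc.act [((some a₁ : Option A), T₁)]) = false := by
  simp [enablesOmega]

lemma succD_single (a₁ : A) (T₁ : Proc (Option A)) :
    succD (some a₁) (Proc.act [((some a₁ : Option A), T₁)]) = T₁ := by
  simp [succD, getSucc, List.find?]

lemma res_act_single (a₁ : A) (T₁ : Proc (Option A)) (ls : List (A × Proc A)) :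
    Res (Proc.act ls) (Proc.act [((some a₁ : Option A), T₁)]) =
      if a₁ ∈ menu (Proc.act ls) then Res (succD a₁ (Proc.act ls)) T₁ else 0 := by
  rw [Res, enablesOmega_single, if_neg (by simp)]
  have hsync : sync (Proc.act ls) (Proc.act [((some a₁ : Option A), T₁)])
      = (menu (Proc.act ls)).filter (· = a₁) := by
    unfold sync
    apply Finset.filter_congr
    intro a _
    simp [menu]
  rw [hsync, Finset.filter_eq']
  by_cases h : a₁ ∈ menu (Proc.act ls)
  · rw [if_pos h, if_pos h]
    rw [Finset.sum_attach ({a₁} : Finset A)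
      (fun a => (Xv a / ∑ b ∈ ({a₁} : Finset A), Xv b) *
        Res (succD a (Proc.act ls)) (succD (some a) (Proc.act [((some a₁ : Option A), T₁)])))]
    rw [Finset.sum_singleton, Finset.sum_singleton, div_self (Xv_ne_zero a₁), one_mul,
      succD_single]
  · rw [if_neg h, if_neg h]
    simp

lemma pafter_act (M : Finset A) (a : A) (l : List (A × Proc A)) :
    pafter M a (Proc.act l) = succD a (Proc.act l) := by
  rw [pafter]

lemma pafter_prob (M : Finset A) (a : A) (l : List (ℝ × Proc A)) :
    pafter M a (Proc.prob l) =
      Proc.prob ((l.filter fun x => decide (menu x.2 = M)).flatMap fun x =>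
        match getSucc a x.2 with
        | none => []
        | some (Proc.prob l'') => l''.map fun y =>
            (x.1 * y.1 / (((l.filter fun x => decide (menu x.2 = M)).map Prod.fst).sum), y.2)
        | some s' => [(x.1 / (((l.filter fun x => decide (menu x.2 = M)).map Prod.fst).sum), s')]) := by
  rw [pafter]


lemma res_prob {T : Proc (Option A)} (hω : enablesOmega T = false) (l : List (ℝ × Proc A)) :
    Res (Proc.prob l) T = (l.map fun x => Cr x.1 * Res x.2 T).sum := by
  rw [Res, hω, if_neg (by simp), attach_sum l (fun x => Cr x.1 * Res x.2 T)]

lemma key (a₁ : A) (M₁ : Finset A) (T₁ : Proc (Option A)) (hω : enablesOmega T₁ = false)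
    (ha : a₁ ∈ M₁) (s : Proc A) (hs : WF s) (hpos : 0 < P1 M₁ s)
    (huniq : ∀ M : Finset A, 0 < P1 M s → a₁ ∈ M → M = M₁) :
    Res s (Proc.act [((some a₁ : Option A), T₁)])
      = Cr (P1 M₁ s) * Res (pafter M₁ a₁ s) T₁ := by
  cases s with
  | act ls =>
    -- menu = M₁, P1 = 1
    rw [P1_act] at hpos ⊢
    have hmenu : menu (Proc.act ls) = M₁ := by
      by_contra h; rw [if_neg h] at hpos; exact lt_irrefl 0 hpos
    rw [if_pos hmenu]
    have : (Cr (1:ℝ) : RF A) = 1 := by simp [Cr]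
    rw [this, one_mul, pafter_act, res_act_single, if_pos (hmenu ▸ ha)]
  | prob ls =>
    rcases hs with _ | ⟨hsum, hposw, hle, hact, hwf⟩
    set l₁ := ls.filter fun x => decide (menu x.2 = M₁) with hl₁
    set π : ℝ := (l₁.map Prod.fst).sum with hπ
    have hP1eq : P1 M₁ (Proc.prob ls) = π := P1_prob M₁ ls hact
    have hπpos : 0 < π := hP1eq ▸ hpos
    -- LHS
    rw [res_prob (enablesOmega_single a₁ T₁) ls]
    have hlhs : (ls.map fun x => Cr x.1 * Res x.2 (Proc.act [((some a₁ : Option A), T₁)]))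
        = ls.map fun x => if menu x.2 = M₁ then Cr x.1 * Res (succD a₁ x.2) T₁ else 0 := by
      apply List.map_congr_left
      intro x hx
      obtain ⟨l', hl'⟩ := hact x hx
      by_cases h : menu x.2 = M₁
      · rw [if_pos h, hl', res_act_single, if_pos (by rw [← hl', h]; exact ha), ← hl']
      · rw [if_neg h]
        have hnotmem : a₁ ∉ menu x.2 := by
          intro hmem
          apply h
          apply huniq _ _ hmem
          -- 0 < P1 (menu x.2) (prob ls)
          rw [P1_prob _ ls hact]
          have hxf : x ∈ ls.filter fun y => decide (menu y.2 = menu x.2) := by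
            rw [List.mem_filter]; exact ⟨hx, by simp⟩
          have hx1 : x.1 ∈ (ls.filter fun y => decide (menu y.2 = menu x.2)).map Prod.fst :=
            List.mem_map_of_mem (f := Prod.fst) hxf
          have hnn : ∀ r ∈ (ls.filter fun y => decide (menu y.2 = menu x.2)).map Prod.fst,
              (0:ℝ) ≤ r := by
            intro r hr
            obtain ⟨y, hy, rfl⟩ := List.mem_map.mp hr
            exact le_of_lt (hposw y (List.mem_of_mem_filter hy))
          exact lt_of_lt_of_le (hposw x hx) (List.single_le_sum hnn _ hx1)
        rw [hl', res_act_single, ← hl', if_neg hnotmem, mul_zero]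
    rw [hlhs, sum_map_ite (fun x => menu x.2 = M₁) (fun x => Cr x.1 * Res (succD a₁ x.2) T₁) ls]
    -- RHS
    rw [hP1eq, pafter_prob, res_prob hω, sum_map_flatMap, ← hπ]
    rw [← sum_map_mul (Cr π) l₁]
    apply congrArg
    apply List.map_congr_left
    intro x hx
    have hxls : x ∈ ls := List.mem_of_mem_filter hx
    have hmx : menu x.2 = M₁ := by
      have := (List.mem_filter.mp hx).2; simpa using this
    obtain ⟨l', hl'⟩ := hact x hxls
    have hmem : a₁ ∈ menu x.2 := hmx ▸ ha
    have hg : getSucc a₁ x.2 = some (succD a₁ x.2) := by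
      rw [hl'] at hmem ⊢; exact getSucc_of_mem hmem
    have hfac : ∀ z : RF A, Cr π * (Cr (x.1 / π) * z) = Cr x.1 * z := by
      intro z
      rw [← mul_assoc, ← Cr_mul, mul_div_cancel₀ _ (ne_of_gt hπpos)]
    rw [hg]
    cases hsucc : succD a₁ x.2 with
    | act l'' =>
      simp only [List.map_cons, List.map_nil, List.sum_cons, List.sum_nil, add_zero]
      rw [hfac]
    | prob l'' =>
      rw [List.map_map]
      have hmap : (l''.map ((fun z => Cr z.1 * Res z.2 T₁) ∘ fun y => ((x.1 * y.1 / π, y.2) : ℝ × Proc A)))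
          = l''.map fun y => Cr (x.1 / π) * (Cr y.1 * Res y.2 T₁) := by
        apply List.map_congr_left
        intro y _
        show Cr (x.1 * y.1 / π) * Res y.2 T₁ = _
        rw [← mul_assoc, ← Cr_mul, mul_div_right_comm]
      rw [hmap, sum_map_mul, hfac, res_prob hω]

end ProofAux

open Proc in
/-- Case 2.1 of the proof of Theorem 2: suppose `s` and `t`
agree on all first-level menu probabilities, `a₁ ∈ M₁`, `P_s^1(M₁) > 0`, `a₁`
belongs to no first-level menu of `s` other than `M₁`, and some test `T₁`
distinguishes `s_{(M₁,a₁)}` from `t_{(M₁,a₁)}`.  Then the test `a₁.T₁`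
distinguishes `s` and `t`. -/
theorem stmt11 {A : Type} [Fintype A] [DecidableEq A] (s t : Proc A)
    (hs : WF s) (ht : WF t)
    (hP1 : ∀ M : Finset A, P1 M s = P1 M t)
    (a₁ : A) (M₁ : Finset A) (ha : a₁ ∈ M₁) (hpos : 0 < P1 M₁ s)
    (huniq : ∀ M : Finset A, 0 < P1 M s → a₁ ∈ M → M = M₁)
    (T₁ : Proc (Option A)) (hT₁ : WF T₁)
    (hdist : Res (pafter M₁ a₁ s) T₁ ≠ Res (pafter M₁ a₁ t) T₁) :
    Res s (Proc.act [((some a₁ : Option A), T₁)]) ≠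
      Res t (Proc.act [((some a₁ : Option A), T₁)]) := by
  by_cases hωT : enablesOmega T₁ = true
  · exact absurd (by rw [ProofAux.res_of_omega T₁ hωT, ProofAux.res_of_omega T₁ hωT]) hdist
  · have hω : enablesOmega T₁ = false := by
      simpa using hωT
    have hpt : 0 < P1 M₁ t := hP1 M₁ ▸ hpos
    have hkS := ProofAux.key a₁ M₁ T₁ hω ha s hs hpos huniq
    have hkT := ProofAux.key a₁ M₁ T₁ hω ha t ht hpt
      (fun M hM haM => huniq M (by rw [hP1]; exact hM) haM)
    intro h
    rw [hkS, hkT, hP1 M₁] at h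
    exact hdist (mul_left_cancel₀
      (fun h0 => (ne_of_gt hpt) (ProofAux.Cr_eq_zero_iff.mp h0)) h)
end
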